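/- arXiv:2509.16406 — 2 statements merged into one kernel-verified Lean document; each statement's English description precedes it below -/
import Mathlib

section
/- The special concavity property fails for the Monge–Ampère operator F = σ_n (the case k = n): for every n ≥ 2, every ε > 0, every diagonal matrix W = diag(λ₁,…,λ_n) with all λ_α > 0, and every symmetric matrix ξ whose only nonzero entry is ξ₁₁ ≠ 0, one has −(d²/dt²)|_{t=0} det(W + tξ) = 0, while (1+ε)·(det W/λ₁)·ξ₁₁²/λ₁ − ((det W/λ₁)·ξ₁₁)²/det W = ε·det W·ξ₁₁²/λ₁² > 0; in particular the inequality −(d²/dt²)|_{t=0} det(W+tξ) ≥ (1+ε)·(det W/λ₁)·ξ₁₁²/λ₁ − ((det W/λ₁)ξ₁₁)²/det W fails. -/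
open scoped Classical

noncomputable section

/-- The `j`-th elementary symmetric function of the family `κ` restricted to the
finite index set `s`; it is `1` for `j = 0`, and `0` for `j < 0` (or for `j`
larger than the cardinality of `s`). -/
def sigmaE {ι : Type*} (s : Finset ι) (j : ℤ) (κ : ι → ℝ) : ℝ :=
  if 0 ≤ j then ∑ t ∈ s.powersetCard j.toNat, ∏ i ∈ t, κ i else 0

/-- `σ_j(κ)`, the `j`-th elementary symmetric polynomial evaluated at `κ`. -/
def sigmaV {ι : Type*} [Fintype ι] (j : ℤ) (κ : ι → ℝ) : ℝ :=
  sigmaE Finset.univ j κ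

/-- `σ_j(κ|α)`: `σ_j` of `κ` with the `α`-th entry deleted. -/
def sigmaV1 {ι : Type*} [Fintype ι] [DecidableEq ι] (j : ℤ) (κ : ι → ℝ) (α : ι) : ℝ :=
  sigmaE (Finset.univ.erase α) j κ

/-- `σ_j(κ|αβ)`: `σ_j` of `κ` with the `α`-th and `β`-th entries deleted. -/
def sigmaV2 {ι : Type*} [Fintype ι] [DecidableEq ι] (j : ℤ) (κ : ι → ℝ) (α β : ι) : ℝ :=
  sigmaE ((Finset.univ.erase α).erase β) j κ

/-- `σ_j(A)` for a real `n × n` matrix `A`: the `j`-th elementary symmetric function of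
the eigenvalues of `A` when `A` is symmetric (= Hermitian over `ℝ`), junk value `0`
otherwise. -/
def sigmaMat {n : ℕ} (j : ℤ) (A : Matrix (Fin n) (Fin n) ℝ) : ℝ :=
  if h : A.IsHermitian then sigmaV j h.eigenvalues else 0

/-- The Hessian quotient operator `F(A) = σ_n(A)/σ_{n-k}(A)`. -/
def Fquot {n : ℕ} (k : ℕ) (A : Matrix (Fin n) (Fin n) ℝ) : ℝ :=
  sigmaMat (n : ℤ) A / sigmaMat ((n : ℤ) - (k : ℤ)) A


namespace Matrix

variable {n R : Type*} [DecidableEq n] [CommRing R]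

theorem add_smul_eq_updateRow_of_eq_zero_off_row (M ξ : Matrix n n R) {i : n}
    (hξ : ∀ j ≠ i, ξ j = 0) (t : R) : M + t • ξ = M.updateRow i (M i + t • ξ i) := by
  ext j k
  by_cases hj : j = i
  · subst hj
    simp
  · simp [hj, hξ j hj]

theorem det_add_smul_of_eq_zero_off_row [Fintype n] (M ξ : Matrix n n R) {i : n}
    (hξ : ∀ j ≠ i, ξ j = 0) (t : R) :
    (M + t • ξ).det = M.det + t * (M.updateRow i (ξ i)).det := by
  rw [add_smul_eq_updateRow_of_eq_zero_off_row M ξ hξ, det_updateRow_add, det_updateRow_smul,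
    updateRow_eq_self]

end Matrix

theorem iteratedDeriv_two_const_add_mul {𝕜 : Type*} [NontriviallyNormedField 𝕜] (a b x : 𝕜) :
    iteratedDeriv 2 (fun t => a + t * b) x = 0 := by
  simp [iteratedDeriv_const_add, iteratedDeriv_fun_id]

theorem iteratedDeriv_two_det_add_smul_of_eq_zero_off_row {𝕜 n : Type*}
    [NontriviallyNormedField 𝕜] [Fintype n] [DecidableEq n] (M ξ : Matrix n n 𝕜) {i : n}
    (hξ : ∀ j ≠ i, ξ j = 0) (x : 𝕜) :
    iteratedDeriv 2 (fun t : 𝕜 => (M + t • ξ).det) x = 0 := by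
  simp only [Matrix.det_add_smul_of_eq_zero_off_row M ξ hξ]
  exact iteratedDeriv_two_const_add_mul _ _ x

theorem concavity_defect_eq {K : Type*} [Field K] (ε D l c : K) (hD : D ≠ 0) (hl : l ≠ 0) :
    (1 + ε) * (D / l) * c ^ 2 / l - (D / l * c) ^ 2 / D = ε * D * c ^ 2 / l ^ 2 := by
  field_simp
  ring

/-- the special concavity property fails for the Monge–Ampère operator
`F = σ_n = det`. For every `n ≥ 2`, `ε > 0`, diagonal `W = diag(λ)` with positive entries
and symmetric `ξ` whose only nonzero entry is `ξ₁₁ ≠ 0`, one has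
`-(d²/dt²)|₀ det(W+tξ) = 0` while
`(1+ε)(det W/λ₁)ξ₁₁²/λ₁ - ((det W/λ₁)ξ₁₁)²/det W = ε det W ξ₁₁²/λ₁² > 0`,
so the corresponding concavity inequality fails. -/
theorem stmt_3 (n : ℕ) (hn : 2 ≤ n) (ε : ℝ) (hε : 0 < ε)
    (lam : Fin n → ℝ) (hpos : ∀ α, 0 < lam α) :
    let i0 : Fin n := ⟨0, by omega⟩
    let W : Matrix (Fin n) (Fin n) ℝ := Matrix.diagonal lam
    ∀ ξ : Matrix (Fin n) (Fin n) ℝ,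
      ξ i0 i0 ≠ 0 → (∀ α β : Fin n, ¬(α = i0 ∧ β = i0) → ξ α β = 0) →
      (-(iteratedDeriv 2 (fun t : ℝ => (W + t • ξ).det) 0) = 0) ∧
      ((1 + ε) * (W.det / lam i0) * (ξ i0 i0) ^ 2 / lam i0
          - ((W.det / lam i0) * ξ i0 i0) ^ 2 / W.det
        = ε * W.det * (ξ i0 i0) ^ 2 / (lam i0) ^ 2) ∧
      (0 < ε * W.det * (ξ i0 i0) ^ 2 / (lam i0) ^ 2) ∧
      ¬(-(iteratedDeriv 2 (fun t : ℝ => (W + t • ξ).det) 0)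
          ≥ (1 + ε) * (W.det / lam i0) * (ξ i0 i0) ^ 2 / lam i0
            - ((W.det / lam i0) * ξ i0 i0) ^ 2 / W.det) := by
  intro i0 W ξ hξ₀ hξ
  have hrow : ∀ α ≠ i0, ξ α = 0 := fun α hα => funext fun β => hξ α β fun h => hα h.1
  have hsecond : iteratedDeriv 2 (fun t : ℝ => (W + t • ξ).det) 0 = 0 :=
    iteratedDeriv_two_det_add_smul_of_eq_zero_off_row W ξ hrow 0
  have hdet : 0 < W.det := by
    rw [Matrix.det_diagonal]
    exact Finset.prod_pos fun α _ => hpos α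
  have hdefect := concavity_defect_eq ε W.det (lam i0) (ξ i0 i0) hdet.ne' (hpos i0).ne'
  have hdefect_pos : 0 < ε * W.det * (ξ i0 i0) ^ 2 / (lam i0) ^ 2 := by
    have hlam := hpos i0
    positivity
  refine ⟨by rw [hsecond, neg_zero], hdefect, hdefect_pos, ?_⟩
  rw [hsecond, hdefect, neg_zero]
  exact not_le.mpr hdefect_pos
end
end

section
/- Let n ≥ 2 and 1 ≤ k ≤ n−1 and set α = n−k+1 (so α ≥ 2). There exist positive constants c and c' depending only on n and k such that for every κ ∈ ℝ^n with 0 < κ₁ ≤ κ₂ ≤ … ≤ κ_n: (i) σ_{k−1}(κ|α1)·κ_α ≥ c·σ_k(κ), and (ii) σ_{k−1}(κ|α1) ≥ c'·σ_{k−1}(κ|1). -/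
/-!
For increasingly ordered positive `κ`, every product of `j` entries is at most the product `T_j`
of the `j` largest ones, so `σ_k(κ) ≤ C(n,k) T_k` and `σ_{k-1}(κ|1) ≤ C(n-1,k-1) T_{k-1}`.
Since `α = n-k+1`, `T_k = κ_α T_{k-1}`; and the `k-1` largest entries avoid `κ_1` and `κ_α`,
so `T_{k-1}` is one of the terms of `σ_{k-1}(κ|α1)`. Hence `c = 1/C(n,k)`, `c' = 1/C(n-1,k-1)`.
-/

open scoped Classical

noncomputable section

namespace Finset

variable {ι : Type*} [DecidableEq ι] {κ : ι → ℝ}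

theorem prod_le_prod_of_card_eq_of_sdiff_le {s t : Finset ι} (h0 : ∀ i ∈ s, 0 ≤ κ i)
    (hcard : s.card = t.card) (hle : ∀ i ∈ s \ t, ∀ l ∈ t \ s, κ i ≤ κ l) :
    ∏ i ∈ s, κ i ≤ ∏ i ∈ t, κ i := by
  rw [← prod_inter_mul_prod_sdiff s t, ← prod_inter_mul_prod_sdiff t s, inter_comm t s]
  have hsd : (s \ t).card = (t \ s).card := card_sdiff_comm hcard
  refine mul_le_mul_of_nonneg_left ?_ (prod_nonneg fun i hi => h0 i (mem_inter.1 hi).1)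
  rcases (s \ t).eq_empty_or_nonempty with hst | hst
  · rw [hst, card_empty, eq_comm, card_eq_zero] at hsd
    rw [hst, hsd]
  obtain ⟨j, hj, hmax⟩ := (s \ t).exists_max_image κ hst
  calc ∏ i ∈ s \ t, κ i
      ≤ ∏ _ ∈ s \ t, κ j :=
        prod_le_prod (fun i hi => h0 i (mem_sdiff.1 hi).1) hmax
    _ = ∏ _ ∈ t \ s, κ j := by rw [prod_const, prod_const, hsd]
    _ ≤ ∏ i ∈ t \ s, κ i :=
        prod_le_prod (fun _ _ => h0 j (mem_sdiff.1 hj).1) (hle j hj)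

end Finset

def topFinset (n j : ℕ) : Finset (Fin n) := {i | n - j ≤ (i : ℕ)}

theorem mem_topFinset {n j : ℕ} {i : Fin n} : i ∈ topFinset n j ↔ n - j ≤ (i : ℕ) := by
  simp [topFinset]

theorem card_topFinset {n j : ℕ} (hj : j ≤ n) : (topFinset n j).card = j := by
  have hsplit := Finset.card_filter_add_card_filter_not (s := Finset.univ)
    (fun i : Fin n => (i : ℕ) < n - j)
  simp only [Fin.card_filter_val_lt, Finset.card_univ, Fintype.card_fin, not_lt] at hsplit
  rw [topFinset]
  omega

theorem topFinset_succ {n j : ℕ} (hj : j < n) :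
    topFinset n (j + 1) = insert ⟨n - (j + 1), by omega⟩ (topFinset n j) := by
  ext i
  simp only [Finset.mem_insert, mem_topFinset, Fin.ext_iff]
  omega

theorem topFinset_subset_erase_erase {n j : ℕ} {a b : Fin n} (ha : (a : ℕ) < n - j)
    (hb : (b : ℕ) < n - j) : topFinset n j ⊆ (Finset.univ.erase a).erase b := fun i hi => by
  rw [mem_topFinset] at hi
  simp only [Finset.mem_erase, ne_eq, Fin.ext_iff, Finset.mem_univ, and_true]
  omega

theorem prod_topFinset_succ {n j : ℕ} (hj : j < n) (κ : Fin n → ℝ) :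
    ∏ i ∈ topFinset n (j + 1), κ i = κ ⟨n - (j + 1), by omega⟩ * ∏ i ∈ topFinset n j, κ i := by
  rw [topFinset_succ hj, Finset.prod_insert (by simp [mem_topFinset]; omega)]

theorem prod_le_prod_topFinset {n : ℕ} {κ : Fin n → ℝ} (h0 : ∀ i, 0 ≤ κ i) (hκ : Monotone κ)
    (t : Finset (Fin n)) : ∏ i ∈ t, κ i ≤ ∏ i ∈ topFinset n t.card, κ i := by
  have hcard : t.card ≤ n := by simpa using t.card_le_univ
  refine Finset.prod_le_prod_of_card_eq_of_sdiff_le (fun i _ => h0 i)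
    (card_topFinset hcard).symm fun i hi l hl => hκ ?_
  rw [Finset.mem_sdiff, mem_topFinset] at hi hl
  rw [Fin.le_def]
  omega

section sigmaE

variable {ι : Type*} {s : Finset ι} {κ : ι → ℝ}

theorem sigmaE_natCast (s : Finset ι) (j : ℕ) (κ : ι → ℝ) :
    sigmaE s j κ = ∑ t ∈ s.powersetCard j, ∏ i ∈ t, κ i := by
  simp [sigmaE]

theorem prod_le_sigmaE (h0 : ∀ i ∈ s, 0 ≤ κ i) {t : Finset ι} (hts : t ⊆ s) :
    ∏ i ∈ t, κ i ≤ sigmaE s t.card κ := by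
  rw [sigmaE_natCast]
  refine Finset.single_le_sum (f := fun t => ∏ i ∈ t, κ i) (fun u hu => ?_)
    (Finset.mem_powersetCard.2 ⟨hts, rfl⟩)
  exact Finset.prod_nonneg fun i hi => h0 i (Finset.mem_powersetCard.1 hu |>.1 hi)

theorem sigmaE_le_choose_mul {j : ℕ} {B : ℝ}
    (hB : ∀ t ⊆ s, t.card = j → ∏ i ∈ t, κ i ≤ B) :
    sigmaE s j κ ≤ s.card.choose j * B := by
  rw [sigmaE_natCast, ← Finset.card_powersetCard, ← nsmul_eq_mul]
  exact Finset.sum_le_card_nsmul _ _ _ fun t ht => hB t (Finset.mem_powersetCard.1 ht).1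
    (Finset.mem_powersetCard.1 ht).2

end sigmaE

theorem sigmaE_le_choose_mul_prod_topFinset {n : ℕ} {κ : Fin n → ℝ} (h0 : ∀ i, 0 ≤ κ i)
    (hκ : Monotone κ) (s : Finset (Fin n)) (j : ℕ) :
    sigmaE s j κ ≤ s.card.choose j * ∏ i ∈ topFinset n j, κ i :=
  sigmaE_le_choose_mul fun t _ ht => ht ▸ prod_le_prod_topFinset h0 hκ t

/-- inequalities (2.21): for `n ≥ 2`, `1 ≤ k ≤ n-1` and `α = n-k+1`
(1-indexed; `α ≥ 2`), there are positive constants `c, c'` depending only on `n, k` such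
that for every increasingly ordered positive `κ ∈ ℝⁿ`:
(i) `σ_{k-1}(κ|α1) κ_α ≥ c σ_k(κ)`, and (ii) `σ_{k-1}(κ|α1) ≥ c' σ_{k-1}(κ|1)`. -/
theorem stmt_9 (n k : ℕ) (hn : 2 ≤ n) (hk1 : 1 ≤ k) (hk2 : k ≤ n - 1) :
    ∃ c c' : ℝ, 0 < c ∧ 0 < c' ∧
      ∀ κ : Fin n → ℝ, 0 < κ ⟨0, by omega⟩ → (∀ i j : Fin n, i ≤ j → κ i ≤ κ j) →
        let i0 : Fin n := ⟨0, by omega⟩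
        let a : Fin n := ⟨n - k, by omega⟩
        sigmaV2 ((k : ℤ) - 1) κ a i0 * κ a ≥ c * sigmaV (k : ℤ) κ ∧
        sigmaV2 ((k : ℤ) - 1) κ a i0 ≥ c' * sigmaV1 ((k : ℤ) - 1) κ i0 := by
  obtain ⟨m, rfl⟩ : ∃ m, k = m + 1 := ⟨k - 1, by omega⟩
  have hC : (0 : ℝ) < n.choose (m + 1) := by exact_mod_cast Nat.choose_pos (by omega)
  have hC' : (0 : ℝ) < (n - 1).choose m := by exact_mod_cast Nat.choose_pos (by omega)
  refine ⟨(n.choose (m + 1) : ℝ)⁻¹, ((n - 1).choose m : ℝ)⁻¹, inv_pos.2 hC, inv_pos.2 hC', ?_⟩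
  intro κ hpos hκ i0 a
  have h0 : ∀ i, 0 ≤ κ i := fun i => hpos.le.trans (hκ i0 i (Nat.zero_le _))
  rw [show ((m + 1 : ℕ) : ℤ) - 1 = (m : ℤ) by push_cast; ring]
  set T := ∏ i ∈ topFinset n m, κ i
  have hT : T ≤ sigmaV2 m κ a i0 := by
    have := prod_le_sigmaE (fun i _ => h0 i)
      (topFinset_subset_erase_erase (j := m) (a := a) (b := i0) (by simp only [a]; omega)
        (by simp only [i0]; omega))
    rwa [card_topFinset (by omega)] at this
  have hσ : sigmaV (m + 1 : ℕ) κ ≤ n.choose (m + 1) * (κ a * T) := by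
    have := sigmaE_le_choose_mul_prod_topFinset h0 hκ Finset.univ (m + 1)
    rwa [Finset.card_univ, Fintype.card_fin, prod_topFinset_succ (by omega)] at this
  have hσ₁ : sigmaV1 m κ i0 ≤ (n - 1).choose m * T := by
    have := sigmaE_le_choose_mul_prod_topFinset h0 hκ (Finset.univ.erase i0) m
    rwa [Finset.card_erase_of_mem (Finset.mem_univ _), Finset.card_univ, Fintype.card_fin] at this
  constructor
  · calc (n.choose (m + 1) : ℝ)⁻¹ * sigmaV (m + 1 : ℕ) κ ≤ κ a * T := by
          rwa [inv_mul_le_iff₀ hC]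
      _ ≤ sigmaV2 m κ a i0 * κ a := by
          rw [mul_comm]
          exact mul_le_mul_of_nonneg_right hT (h0 a)
  · calc ((n - 1).choose m : ℝ)⁻¹ * sigmaV1 m κ i0 ≤ T := by rwa [inv_mul_le_iff₀ hC']
      _ ≤ sigmaV2 m κ a i0 := hT
end
end
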